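/- Let d, t ≥ 1, let μ be the Haar probability measure on the unitary group U(d), and set γ(t,d) := ∫ |tr U|^{2t} dμ(U). For any finite list of unitaries U_1, …, U_K ∈ U(d), the t-th frame potential Φ_t := (1/K²)·Σ_{j,k=1}^{K} |tr(U_j U_k^†)|^{2t} satisfies Φ_t ≥ γ(t,d), with equality if and only if (1/K)·Σ_{j=1}^{K} U_j^{⊗t} ⊗ (U_j^{⊗t})^* = ∫ U^{⊗t} ⊗ (U^{⊗t})^* dμ(U), i.e. if and only if {U_j} is a unitary t-design. -/

import Mathlib

/-!
Let `v(U)` be the vector of entries of `U^{⊗t} ⊗ (U^{⊗t})^*`. Its inner products are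
`⟪v(A), v(B)⟫ = |tr(B A†)|^{2t}`, so the frame potential is `‖w‖²` for the average
`w = (1/K) Σ_j v(U_j)`. Right invariance of `μ` gives `⟪v(A), m⟫ = γ(t,d)` for every unitary `A`,
where `m = ∫ v dμ`; hence `‖m‖² = Re ⟪w, m⟫ = γ(t,d)`, and `‖w - m‖² = Φ_t - γ(t,d)` is nonnegative and vanishes
exactly when `w = m`.
-/

open scoped BigOperators

noncomputable section

/-- `t`-fold tensor (Kronecker) power of a matrix, acting on `(ℂ^α)^{⊗t}`. -/
def tpow {α : Type*} [Fintype α] (M : Matrix α α ℂ) (t : ℕ) :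
    Matrix (Fin t → α) (Fin t → α) ℂ :=
  Matrix.of fun x y => ∏ i, M (x i) (y i)

/-- The rank-one operator `|ψ⟩⟨ψ|`. -/
def rankOne {α : Type*} (ψ : α → ℂ) : Matrix α α ℂ :=
  Matrix.of fun i j => ψ i * (starRingEnd ℂ) (ψ j)

/-- The operator `U_σ` permuting the `t` tensor factors of `(ℂ^α)^{⊗t}`. -/
def permOp (α : Type*) [DecidableEq α] {t : ℕ} (σ : Equiv.Perm (Fin t)) :
    Matrix (Fin t → α) (Fin t → α) ℂ :=
  Matrix.of fun x y => if (fun k => x (σ k)) = y then 1 else 0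

/-- The projector `P_[t]` onto the symmetric subspace `Sym_t(ℂ^α)`. -/
def symProj (α : Type*) [DecidableEq α] (t : ℕ) :
    Matrix (Fin t → α) (Fin t → α) ℂ :=
  (t.factorial : ℂ)⁻¹ • ∑ σ : Equiv.Perm (Fin t), permOp α σ

open MeasureTheory

instance matrixMeasurableSpace (m n : Type*) [MeasurableSpace (m → n → ℂ)] :
    MeasurableSpace (Matrix m n ℂ) :=
  inferInstanceAs (MeasurableSpace (m → n → ℂ))

open Matrix ComplexConjugate

section TensorPower

variable {n : Type*} [Fintype n]

lemma tpow_mul (A B : Matrix n n ℂ) (t : ℕ) : tpow (A * B) t = tpow A t * tpow B t := by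
  ext x y
  simp only [tpow, mul_apply, of_apply, Finset.prod_univ_sum, Fintype.piFinset_univ,
    Finset.prod_mul_distrib]

lemma conjTranspose_tpow (A : Matrix n n ℂ) (t : ℕ) : (tpow A t)ᴴ = tpow Aᴴ t := by
  ext x y
  simp [tpow, conjTranspose_apply]

lemma trace_tpow (A : Matrix n n ℂ) (t : ℕ) : (tpow A t).trace = A.trace ^ t := by
  simp only [trace, diag, tpow, of_apply, Finset.sum_pow', Fintype.piFinset_univ]

lemma sum_tpow_mul_conj_tpow (A B : Matrix n n ℂ) (t : ℕ) :
    ∑ q : (Fin t → n) × (Fin t → n), tpow A t q.1 q.2 * conj (tpow B t q.1 q.2)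
      = (A * Bᴴ).trace ^ t := by
  rw [← trace_tpow, tpow_mul, ← conjTranspose_tpow]
  simp [trace, mul_apply, conjTranspose_apply, Fintype.sum_prod_type]

end TensorPower

instance matrixBorelSpace (m n : Type*) [Fintype m] [Fintype n] : BorelSpace (Matrix m n ℂ) :=
  inferInstanceAs (BorelSpace (m → n → ℂ))

section MomentVector

variable {n : Type*} [Fintype n]

/-- The entries of `U^{⊗t} ⊗ (U^{⊗t})^*`, indexed by `((x, y), (x', y'))`, as a vector. -/
def momentVec (t : ℕ) (U : Matrix n n ℂ) :
    EuclideanSpace ℂ (((Fin t → n) × (Fin t → n)) × ((Fin t → n) × (Fin t → n))) :=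
  WithLp.toLp 2 fun p => tpow U t p.1.1 p.1.2 * conj (tpow U t p.2.1 p.2.2)

lemma inner_momentVec (t : ℕ) (A B : Matrix n n ℂ) :
    inner ℂ (momentVec t A) (momentVec t B) = ((‖(B * Aᴴ).trace‖ ^ (2 * t) : ℝ) : ℂ) := by
  have hsplit : inner ℂ (momentVec t A) (momentVec t B)
      = (∑ q : (Fin t → n) × (Fin t → n), tpow B t q.1 q.2 * conj (tpow A t q.1 q.2)) *
          conj (∑ q : (Fin t → n) × (Fin t → n), tpow B t q.1 q.2 * conj (tpow A t q.1 q.2)) := by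
    rw [map_sum, Finset.sum_mul_sum, ← Fintype.sum_prod_type']
    simp only [momentVec, EuclideanSpace.inner_eq_star_dotProduct, dotProduct, map_mul,
      Pi.star_apply, Complex.star_def, Complex.conj_conj]
    exact Finset.sum_congr rfl fun p _ => by ring
  rw [hsplit, sum_tpow_mul_conj_tpow, Complex.mul_conj, Complex.normSq_eq_norm_sq, norm_pow,
    ← pow_mul, mul_comm]

lemma continuous_momentVec (t : ℕ) : Continuous (momentVec (n := n) t) := by
  unfold momentVec tpow; fun_prop

lemma norm_momentVec [DecidableEq n] (t : ℕ) {U : Matrix n n ℂ} (hU : U ∈ unitaryGroup n ℂ) :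
    ‖momentVec t U‖ = (Fintype.card n : ℝ) ^ t := by
  have hsq : ‖momentVec t U‖ ^ 2 = ((Fintype.card n : ℝ) ^ t) ^ 2 := by
    rw [@norm_sq_eq_re_inner ℂ, inner_momentVec, RCLike.re_to_complex, Complex.ofReal_re,
      ← star_eq_conjTranspose, mem_unitaryGroup_iff.mp hU, trace_one, Complex.norm_natCast,
      ← pow_mul, mul_comm]
  exact (pow_left_inj₀ (norm_nonneg _) (by positivity) two_ne_zero).mp hsq

lemma norm_average_momentVec_sq {K : ℕ} (t : ℕ) (Us : Fin K → Matrix n n ℂ) :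
    ‖(K : ℂ)⁻¹ • ∑ j, momentVec t (Us j)‖ ^ 2
      = 1 / (K : ℝ) ^ 2 * ∑ j, ∑ k, ‖(Us j * (Us k)ᴴ).trace‖ ^ (2 * t) := by
  rw [norm_smul, mul_pow, @norm_sq_eq_re_inner ℂ _ _ _ _ (∑ j, momentVec t (Us j)), sum_inner]
  simp only [inner_sum, inner_momentVec, map_sum, RCLike.re_to_complex, Complex.ofReal_re]
  rw [Finset.sum_comm, norm_inv, Complex.norm_natCast, inv_pow, one_div]

end MomentVector

section HaarAverage

variable {n : Type*} [Fintype n] [DecidableEq n] {μ : Measure (Matrix n n ℂ)}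
  [IsProbabilityMeasure μ]

lemma integrable_momentVec (hsupp : ∀ᵐ U ∂μ, U ∈ unitaryGroup n ℂ) (t : ℕ) :
    Integrable (momentVec t) μ :=
  Integrable.of_bound (continuous_momentVec t).aestronglyMeasurable ((Fintype.card n : ℝ) ^ t)
    (hsupp.mono fun _ hU => (norm_momentVec t hU).le)

lemma inner_momentVec_integral (hsupp : ∀ᵐ U ∂μ, U ∈ unitaryGroup n ℂ)
    (hright : ∀ V ∈ unitaryGroup n ℂ, μ.map (fun U => U * V) = μ)
    (t : ℕ) {A : Matrix n n ℂ} (hA : A ∈ unitaryGroup n ℂ) :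
    inner ℂ (momentVec t A) (∫ U, momentVec t U ∂μ)
      = ((∫ U, ‖U.trace‖ ^ (2 * t) ∂μ : ℝ) : ℂ) := by
  rw [← integral_inner (integrable_momentVec hsupp t)]
  simp only [inner_momentVec]
  rw [integral_complex_ofReal]
  congr 1
  conv_rhs => rw [← hright Aᴴ (Unitary.star_mem hA)]
  rw [integral_map (by fun_prop) (by fun_prop)]

lemma norm_integral_momentVec_sq (hsupp : ∀ᵐ U ∂μ, U ∈ unitaryGroup n ℂ)
    (hright : ∀ V ∈ unitaryGroup n ℂ, μ.map (fun U => U * V) = μ) (t : ℕ) :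
    ‖∫ U, momentVec t U ∂μ‖ ^ 2 = ∫ U, ‖U.trace‖ ^ (2 * t) ∂μ := by
  set m := ∫ U, momentVec t U ∂μ
  have hpointwise :
      ∀ᵐ U ∂μ, inner ℂ m (momentVec t U) = ((∫ U, ‖U.trace‖ ^ (2 * t) ∂μ : ℝ) : ℂ) :=
    hsupp.mono fun U hU => by
      rw [← inner_conj_symm, inner_momentVec_integral hsupp hright t hU, Complex.conj_ofReal]
  rw [@norm_sq_eq_re_inner ℂ, ← integral_inner (integrable_momentVec hsupp t),
    integral_congr_ae hpointwise, integral_const]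
  simp

variable {K : ℕ}

lemma re_inner_average_momentVec_integral (hsupp : ∀ᵐ U ∂μ, U ∈ unitaryGroup n ℂ)
    (hright : ∀ V ∈ unitaryGroup n ℂ, μ.map (fun U => U * V) = μ) (t : ℕ) (hK : K ≠ 0)
    {Us : Fin K → Matrix n n ℂ} (hU : ∀ j, Us j ∈ unitaryGroup n ℂ) :
    RCLike.re (inner ℂ ((K : ℂ)⁻¹ • ∑ j, momentVec t (Us j)) (∫ U, momentVec t U ∂μ))
      = ∫ U, ‖U.trace‖ ^ (2 * t) ∂μ := by
  simp only [inner_smul_left, sum_inner, inner_momentVec_integral hsupp hright t (hU _),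
    Finset.sum_const, Finset.card_univ, Fintype.card_fin, nsmul_eq_mul, map_inv₀, map_natCast]
  rw [inv_mul_cancel_left₀ (Nat.cast_ne_zero.mpr hK), RCLike.re_to_complex, Complex.ofReal_re]

lemma norm_average_sub_integral_momentVec_sq (hsupp : ∀ᵐ U ∂μ, U ∈ unitaryGroup n ℂ)
    (hright : ∀ V ∈ unitaryGroup n ℂ, μ.map (fun U => U * V) = μ) (t : ℕ) (hK : K ≠ 0)
    {Us : Fin K → Matrix n n ℂ} (hU : ∀ j, Us j ∈ unitaryGroup n ℂ) :
    ‖(K : ℂ)⁻¹ • ∑ j, momentVec t (Us j) - ∫ U, momentVec t U ∂μ‖ ^ 2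
      = 1 / (K : ℝ) ^ 2 * ∑ j, ∑ k, ‖(Us j * (Us k)ᴴ).trace‖ ^ (2 * t)
        - ∫ U, ‖U.trace‖ ^ (2 * t) ∂μ := by
  rw [@norm_sub_sq ℂ, norm_average_momentVec_sq,
    re_inner_average_momentVec_integral hsupp hright t hK hU,
    norm_integral_momentVec_sq hsupp hright]
  ring

lemma average_momentVec_eq_integral_iff (hsupp : ∀ᵐ U ∂μ, U ∈ unitaryGroup n ℂ) (t : ℕ)
    (Us : Fin K → Matrix n n ℂ) :
    (K : ℂ)⁻¹ • ∑ j, momentVec t (Us j) = ∫ U, momentVec t U ∂μ ↔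
      ∀ x y x' y' : Fin t → n,
        (K : ℂ)⁻¹ * ∑ j, ((∏ i, Us j (x i) (y i)) * conj (∏ i, Us j (x' i) (y' i)))
          = ∫ U, ((∏ i, U (x i) (y i)) * conj (∏ i, U (x' i) (y' i))) ∂μ := by
  have hcoord : ∀ p, (∫ U, momentVec t U ∂μ) p = ∫ U, momentVec t U p ∂μ := fun p =>
    ((EuclideanSpace.proj p).integral_comp_comm (integrable_momentVec hsupp t)).symm
  simp only [WithLp.ext_iff, funext_iff, Prod.forall, hcoord]
  simp only [WithLp.ofLp_smul, WithLp.ofLp_sum, Pi.smul_apply, Finset.sum_apply, smul_eq_mul,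
    momentVec, tpow, of_apply]

end HaarAverage

theorem stmt2 (d t K : ℕ) (hK : 1 ≤ K)
    (μ : Measure (Matrix (Fin d) (Fin d) ℂ)) [IsProbabilityMeasure μ]
    (hsupp : ∀ᵐ U ∂μ, U ∈ Matrix.unitaryGroup (Fin d) ℂ)
    (hright : ∀ V ∈ Matrix.unitaryGroup (Fin d) ℂ,
      Measure.map (fun U => U * V) μ = μ)
    (Us : Fin K → Matrix (Fin d) (Fin d) ℂ)
    (hU : ∀ j, Us j ∈ Matrix.unitaryGroup (Fin d) ℂ) :
    (∫ U, ‖Matrix.trace U‖ ^ (2 * t) ∂μ) ≤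
      (1 / (K : ℝ) ^ 2) * ∑ j, ∑ k,
        ‖Matrix.trace (Us j * (Us k).conjTranspose)‖ ^ (2 * t) ∧
    ((1 / (K : ℝ) ^ 2) * ∑ j, ∑ k,
        ‖Matrix.trace (Us j * (Us k).conjTranspose)‖ ^ (2 * t)
        = ∫ U, ‖Matrix.trace U‖ ^ (2 * t) ∂μ ↔
      ∀ x y x' y' : Fin t → Fin d,
        (K : ℂ)⁻¹ * ∑ j, ((∏ i, Us j (x i) (y i)) *
            (starRingEnd ℂ) (∏ i, Us j (x' i) (y' i)))
          = ∫ U, ((∏ i, U (x i) (y i)) *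
              (starRingEnd ℂ) (∏ i, U (x' i) (y' i))) ∂μ) := by
  have hdist := norm_average_sub_integral_momentVec_sq hsupp hright t (by omega : K ≠ 0) hU
  refine ⟨sub_nonneg.mp (hdist ▸ sq_nonneg _), ?_⟩
  rw [← average_momentVec_eq_integral_iff hsupp, ← sub_eq_zero, ← hdist, sq_eq_zero_iff,
    norm_eq_zero, sub_eq_zero]
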